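/- arXiv:2106.09917 — 6 statements merged into one kernel-verified Lean document; each statement's English description precedes it below -/
import Mathlib

section
/- In a one-one-LQ instance, if some stable matching M_s is feasible, then M_s is a maximum-size envy-free feasible matching: every feasible envy-free matching M satisfies |M| ≤ |M_s|. -/
/-- `BetterThan pref acc o` : a fixed alternative is strictly preferred over the optional
current partner `o`. Being unmatched (`none`, i.e. ⊥) is least preferred, so any
acceptable alternative (`acc`) beats it; against `some x` we use `pref x`. -/
def BetterThan {α : Type*} (pref : α → Prop) (acc : Prop) : Option α → Prop
  | none => acc
  | some x => pref x

/-- A one-to-one matching between agents `A` and resources `B`, given by mutually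
consistent partial partner maps. -/
structure Matching (A B : Type*) where
  mA : A → Option B
  mB : B → Option A
  consistent : ∀ a b, mA a = some b ↔ mB b = some a

/-- The matching only uses mutually acceptable pairs (edges of the instance). -/
def Matching.RespectsE {A B : Type*} (E : A → B → Prop) (M : Matching A B) : Prop :=
  ∀ a b, M.mA a = some b → E a b

/-- Number of matched agents, i.e. the size of the matching. -/
noncomputable def Matching.size {A B : Type*} (M : Matching A B) : ℕ :=
  Nat.card {a : A // (M.mA a).isSome}

/-- `(a,b)` is a blocking pair for `M`: an acceptable pair not in `M` where both sides
strictly prefer each other over their current assignment. -/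
def Blocking {A B : Type*} (E : A → B → Prop) (prefA : A → B → B → Prop)
    (prefB : B → A → A → Prop) (M : Matching A B) (a : A) (b : B) : Prop :=
  E a b ∧ M.mA a ≠ some b ∧
    BetterThan (prefA a b) (E a b) (M.mA a) ∧ BetterThan (prefB b a) (E a b) (M.mB b)

/-- Stability: no blocking pair. -/
def Stable {A B : Type*} (E : A → B → Prop) (prefA : A → B → B → Prop)
    (prefB : B → A → A → Prop) (M : Matching A B) : Prop :=
  ∀ a b, ¬ Blocking E prefA prefB M a b

/-- Agent `a` has justified envy towards agent `a'`, matched to some resource `b`. -/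
def Envies {A B : Type*} (E : A → B → Prop) (prefA : A → B → B → Prop)
    (prefB : B → A → A → Prop) (M : Matching A B) (a a' : A) : Prop :=
  ∃ b, M.mA a' = some b ∧ E a b ∧ BetterThan (prefA a b) (E a b) (M.mA a) ∧ prefB b a a'

/-- Envy-freeness: no envy pair. -/
def EnvyFree {A B : Type*} (E : A → B → Prop) (prefA : A → B → B → Prop)
    (prefB : B → A → A → Prop) (M : Matching A B) : Prop :=
  ∀ a a', ¬ Envies E prefA prefB M a a'

/-- Feasibility: every lower-quota resource is matched. -/
def Feasible {A B : Type*} (lq : B → Prop) (M : Matching A B) : Prop :=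
  ∀ b, lq b → (M.mB b).isSome

/-- Relaxed stability: every agent participating in a blocking pair is matched,
and matched to a lower-quota resource. -/
def RelaxedStable {A B : Type*} (E : A → B → Prop) (prefA : A → B → B → Prop)
    (prefB : B → A → A → Prop) (lq : B → Prop) (M : Matching A B) : Prop :=
  ∀ a b, Blocking E prefA prefB M a b → ∃ b', M.mA a = some b' ∧ lq b'

/-- Strict preference lists: each vertex has an irreflexive, transitive, total order
over its neighbours, and preferences are only over neighbours. -/
structure StrictPrefs {A B : Type*} (E : A → B → Prop) (prefA : A → B → B → Prop)
    (prefB : B → A → A → Prop) : Prop where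
  irreflA : ∀ a b, ¬ prefA a b b
  transA : ∀ a b₁ b₂ b₃, prefA a b₁ b₂ → prefA a b₂ b₃ → prefA a b₁ b₃
  totalA : ∀ a b b', E a b → E a b' → b ≠ b' → prefA a b b' ∨ prefA a b' b
  memA : ∀ a b b', prefA a b b' → E a b ∧ E a b'
  irreflB : ∀ b a, ¬ prefB b a a
  transB : ∀ b a₁ a₂ a₃, prefB b a₁ a₂ → prefB b a₂ a₃ → prefB b a₁ a₃
  totalB : ∀ b a a', E a b → E a' b → a ≠ a' → prefB b a a' ∨ prefB b a' a
  memB : ∀ b a a', prefB b a a' → E a b ∧ E a' b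


/-!
Call an agent *improving* if it strictly prefers its `M`-partner to its `Ms`-partner (being
unmatched in `Ms` counts as worst). If `a` is improving with `M`-partner `b`, stability of `Ms`
forces `b` to be `Ms`-matched to some `a'` whom `b` prefers to `a`, and since `a'` does not envy
`a` in `M`, the agent `a'` is improving as well. The map `a ↦ a'` sends improving agents
injectively to improving agents, hence onto them, so every improving agent is `Ms`-matched.
An agent matched in `M` but not in `Ms` would be improving; therefore `M` matches only agents
that `Ms` matches.
-/

theorem exists_eq_some_of_not_betterThan {α : Type*} {pref : α → Prop} {acc : Prop}
    {o : Option α} (hacc : acc) (h : ¬ BetterThan pref acc o) : ∃ x, o = some x ∧ ¬ pref x := by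
  cases o with
  | none => exact absurd hacc h
  | some x => exact ⟨x, rfl, h⟩

namespace Matching

variable {A B : Type*}

theorem mB_eq_some_iff (M : Matching A B) {a : A} {b : B} : M.mB b = some a ↔ M.mA a = some b :=
  (M.consistent a b).symm

theorem eq_of_mA_eq_some (M : Matching A B) {a₁ a₂ : A} {b : B} (h₁ : M.mA a₁ = some b)
    (h₂ : M.mA a₂ = some b) : a₁ = a₂ :=
  Option.some_injective _ (((M.consistent a₁ b).mp h₁).symm.trans ((M.consistent a₂ b).mp h₂))

theorem size_le_size_of_isSome [Finite A] {M M' : Matching A B}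
    (h : ∀ a, (M.mA a).isSome → (M'.mA a).isSome) : M.size ≤ M'.size :=
  Nat.card_mono (s := {a | (M.mA a).isSome}) (t := {a | (M'.mA a).isSome}) (Set.toFinite _) h

end Matching

section Exchange

variable {A B : Type*} {E : A → B → Prop} {prefA : A → B → B → Prop} {prefB : B → A → A → Prop}

theorem Stable.exists_preferred_partner {M : Matching A B} (hst : Stable E prefA prefB M)
    (hM : M.RespectsE E) (hsp : StrictPrefs E prefA prefB) {a : A} {b : B} (hab : E a b)
    (hne : M.mA a ≠ some b) (hbet : BetterThan (prefA a b) (E a b) (M.mA a)) :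
    ∃ a', M.mA a' = some b ∧ prefB b a' a := by
  obtain ⟨a', hba', hnpref⟩ :=
    exists_eq_some_of_not_betterThan hab fun hb => hst a b ⟨hab, hne, hbet, hb⟩
  have ha'b : M.mA a' = some b := M.mB_eq_some_iff.mp hba'
  have ha'a : a ≠ a' := by rintro rfl; exact hne ha'b
  exact ⟨a', ha'b, (hsp.totalB b a a' hab (hM a' b ha'b) ha'a).resolve_left hnpref⟩

theorem EnvyFree.exists_preferred_partner {M : Matching A B} (hef : EnvyFree E prefA prefB M)
    (hM : M.RespectsE E) (hsp : StrictPrefs E prefA prefB) {a a' : A} {b : B}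
    (hab : M.mA a = some b) (ha'b : E a' b) (hpref : prefB b a' a) :
    ∃ b', M.mA a' = some b' ∧ prefA a' b' b := by
  obtain ⟨b', ha'b', hnpref⟩ :=
    exists_eq_some_of_not_betterThan ha'b fun h => hef a' a ⟨b, hab, ha'b, h, hpref⟩
  have hbb' : b ≠ b' := by
    rintro rfl
    exact hsp.irreflB b a (M.eq_of_mA_eq_some hab ha'b' ▸ hpref)
  exact ⟨b', ha'b', (hsp.totalA a' b b' ha'b (hM a' b' ha'b') hbb').resolve_left hnpref⟩

def improvingAgents (E : A → B → Prop) (prefA : A → B → B → Prop) (M M' : Matching A B) :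
    Set A :=
  {a | ∃ b, M.mA a = some b ∧ BetterThan (prefA a b) (E a b) (M'.mA a)}

variable {M Ms : Matching A B}

theorem exists_improvingAgent_mA_eq (hsp : StrictPrefs E prefA prefB) (hMs : Ms.RespectsE E)
    (hstable : Stable E prefA prefB Ms) (hM : M.RespectsE E) (hef : EnvyFree E prefA prefB M)
    {a : A} (ha : a ∈ improvingAgents E prefA M Ms) :
    ∃ a' ∈ improvingAgents E prefA M Ms, Ms.mA a' = M.mA a := by
  obtain ⟨b, hab, hbet⟩ := ha
  have hne : Ms.mA a ≠ some b := by
    intro h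
    rw [h] at hbet
    exact hsp.irreflA a b hbet
  obtain ⟨a', ha'b, hpref⟩ := hstable.exists_preferred_partner hMs hsp (hM a b hab) hne hbet
  obtain ⟨b', ha'b', hpref'⟩ := hef.exists_preferred_partner hM hsp hab (hMs a' b ha'b) hpref
  refine ⟨a', ⟨b', ha'b', ?_⟩, ha'b.trans hab.symm⟩
  rw [ha'b]
  exact hpref'

theorem isSome_of_mem_improvingAgents [Finite A] (hsp : StrictPrefs E prefA prefB)
    (hMs : Ms.RespectsE E) (hstable : Stable E prefA prefB Ms) (hM : M.RespectsE E)
    (hef : EnvyFree E prefA prefB M) {a : A} (ha : a ∈ improvingAgents E prefA M Ms) :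
    (Ms.mA a).isSome := by
  choose! σ hσS hσ using fun a (hmem : a ∈ improvingAgents E prefA M Ms) =>
    exists_improvingAgent_mA_eq hsp hMs hstable hM hef hmem
  have hinj : Set.InjOn σ (improvingAgents E prefA M Ms) := by
    intro a₁ ha₁ a₂ ha₂ h
    have ⟨b, hb, _⟩ := ha₁
    refine M.eq_of_mA_eq_some hb ?_
    rw [← hσ a₂ ha₂, ← h, hσ a₁ ha₁, hb]
  obtain ⟨x, hx, rfl⟩ :=
    ((Set.toFinite _).injOn_iff_bijOn_of_mapsTo hσS |>.mp hinj).surjOn ha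
  have ⟨b, hb, _⟩ := hx
  rw [hσ x hx, hb]
  rfl

end Exchange

theorem feasible_stable_is_max_envyFree_general {A B : Type*} [Fintype A] (E : A → B → Prop)
    (prefA : A → B → B → Prop) (prefB : B → A → A → Prop)
    (Ms M : Matching A B) (hsp : StrictPrefs E prefA prefB)
    (hMs : Ms.RespectsE E) (hstable : Stable E prefA prefB Ms)
    (hM : M.RespectsE E) (hef : EnvyFree E prefA prefB M) :
    M.size ≤ Ms.size := by
  refine Matching.size_le_size_of_isSome fun a ha => ?_
  obtain ⟨b, hb⟩ := Option.isSome_iff_exists.mp ha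
  by_contra hnone
  have hmem : a ∈ improvingAgents E prefA M Ms := by
    refine ⟨b, hb, ?_⟩
    rw [Option.not_isSome_iff_eq_none.mp hnone]
    exact hM a b hb
  exact hnone (isSome_of_mem_improvingAgents hsp hMs hstable hM hef hmem)

/-- if a stable matching is feasible, then it is a maximum-size
feasible envy-free matching. -/
theorem feasible_stable_is_max_envyFree {A B : Type*} [Fintype A] (E : A → B → Prop)
    (prefA : A → B → B → Prop) (prefB : B → A → A → Prop) (lq : B → Prop)
    (Ms M : Matching A B) (hsp : StrictPrefs E prefA prefB)
    (hMs : Ms.RespectsE E) (hstable : Stable E prefA prefB Ms)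
    (hMsFeas : Feasible lq Ms)
    (hM : M.RespectsE E) (hMFeas : Feasible lq M) (hef : EnvyFree E prefA prefB M) :
    M.size ≤ Ms.size :=
  feasible_stable_is_max_envyFree_general E prefA prefB Ms M hsp hMs hstable hM hef
end

section
/- In a one-to-one instance with a stable matching M_s of size s, for every matched resource b, the rank of M_s(b) in b's preference list is at most s. That is, fewer than s agents are strictly preferred by b over M_s(b). -/
theorem Nat.card_subtype_lt_of_forall_imp {α : Type*} [Finite α] {p q : α → Prop}
    (hpq : ∀ x, p x → q x) {a : α} (hqa : q a) (hpa : ¬ p a) :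
    Nat.card {x // p x} < Nat.card {x // q x} :=
  Set.ncard_lt_ncard (s := {x | p x}) (t := {x | q x}) ⟨hpq, fun h => hpa (h hqa)⟩

theorem Matching.isSome_mA_of_mB_eq_some {A B : Type*} (M : Matching A B) {a : A} {b : B}
    (hab : M.mB b = some a) : (M.mA a).isSome := by
  rw [(M.consistent a b).2 hab, Option.isSome_some]

theorem Stable.isSome_mA_of_prefB {A B : Type*} {E : A → B → Prop}
    {prefA : A → B → B → Prop} {prefB : B → A → A → Prop} {M : Matching A B}
    (hstable : Stable E prefA prefB M) {a a' : A} {b : B} (hab : M.mB b = some a)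
    (hE : E a' b) (hpref : prefB b a' a) : (M.mA a').isSome := by
  rw [Option.isSome_iff_ne_none]
  intro hnone
  refine hstable a' b ⟨hE, ?_, ?_, ?_⟩
  · simp [hnone]
  · simpa only [hnone, BetterThan]
  · simpa only [hab, BetterThan]

theorem stable_partner_rank_le_size_general {A B : Type*} [Fintype A] (E : A → B → Prop)
    (prefA : A → B → B → Prop) (prefB : B → A → A → Prop) (Ms : Matching A B)
    (hsp : StrictPrefs E prefA prefB)
    (hstable : Stable E prefA prefB Ms)
    (b : B) (a : A) (hab : Ms.mB b = some a) :
    Nat.card {a' : A // prefB b a' a} < Ms.size := by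
  have hpreferred_matched : ∀ a', prefB b a' a → (Ms.mA a').isSome := fun a' hpref =>
    hstable.isSome_mA_of_prefB hab (hsp.memB b a' a hpref).1 hpref
  exact Nat.card_subtype_lt_of_forall_imp hpreferred_matched
    (Ms.isSome_mA_of_mB_eq_some hab) (hsp.irreflB b a)

/-- in a stable matching of size s, every matched resource has its
partner within the first s positions of its preference list: fewer than s agents
are strictly preferred by b over its partner. -/
theorem stable_partner_rank_le_size {A B : Type*} [Fintype A] (E : A → B → Prop)
    (prefA : A → B → B → Prop) (prefB : B → A → A → Prop) (Ms : Matching A B)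
    (hsp : StrictPrefs E prefA prefB)
    (hMs : Ms.RespectsE E) (hstable : Stable E prefA prefB Ms)
    (b : B) (a : A) (hab : Ms.mB b = some a) :
    Nat.card {a' : A // prefB b a' a} < Ms.size :=
  stable_partner_rank_le_size_general E prefA prefB Ms hsp hstable b a hab
end

section
/- In a one-to-one instance, suppose M_s is a stable matching and (a,b) ∈ M_s. If agent a has at least 2|M_s|+1 neighbors, then (a,b) is among a's |M_s|·2+1 most-preferred edges. More precisely: the edge (a,b) ∈ M_s cannot have more than 2|M_s| resources that a strictly prefers over b; in fact b is among a's top 2|M_s|+1 choices. -/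
/-!
A resource that `a` prefers to its stable partner must be matched, since otherwise it forms a
blocking pair with `a`. So these resources inject into the matched resources, which are
equinumerous with the matched agents.
-/

namespace Matching

variable {A B : Type*} (M : Matching A B)

def matchedEquiv : {a : A // (M.mA a).isSome} ≃ {b : B // (M.mB b).isSome} where
  toFun a := ⟨(M.mA a).get a.2, by
    rw [(M.consistent _ _).mp (Option.some_get a.2).symm]; rfl⟩
  invFun b := ⟨(M.mB b).get b.2, by
    rw [(M.consistent _ _).mpr (Option.some_get b.2).symm]; rfl⟩
  left_inv a := Subtype.ext <| Option.get_of_eq_some _ <|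
    (M.consistent _ _).mp (Option.some_get a.2).symm
  right_inv b := Subtype.ext <| Option.get_of_eq_some _ <|
    (M.consistent _ _).mpr (Option.some_get b.2).symm

theorem size_eq_card_matched_resources : M.size = Nat.card {b : B // (M.mB b).isSome} :=
  Nat.card_congr M.matchedEquiv

end Matching

theorem Stable.isSome_mB_of_prefA {A B : Type*} {E : A → B → Prop} {prefA : A → B → B → Prop}
    {prefB : B → A → A → Prop} {M : Matching A B} (hsp : StrictPrefs E prefA prefB)
    (hM : Stable E prefA prefB M) {a : A} {b b' : B} (hab : M.mA a = some b)
    (hb' : prefA a b' b) : (M.mB b').isSome := by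
  have hE : E a b' := (hsp.memA a b' b hb').1
  have hne : b ≠ b' := by rintro rfl; exact hsp.irreflA a b hb'
  by_contra hfree
  refine hM a b' ⟨hE, ?_, ?_, ?_⟩
  · rwa [hab, ne_eq, Option.some_inj]
  · rwa [hab]
  · rwa [Option.not_isSome_iff_eq_none.mp hfree]

theorem stable_partner_among_top_general {A B : Type*} [Fintype B]
    (E : A → B → Prop) (prefA : A → B → B → Prop) (prefB : B → A → A → Prop)
    (Ms : Matching A B) (hsp : StrictPrefs E prefA prefB)
    (hstable : Stable E prefA prefB Ms)
    (a : A) (b : B) (hab : Ms.mA a = some b) :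
    Nat.card {b' : B // prefA a b' b} ≤ Ms.size := by
  rw [Ms.size_eq_card_matched_resources]
  exact Nat.card_le_card_of_injective (Subtype.impEmbedding _ _ fun b' hb' =>
    hstable.isSome_mB_of_prefA hsp hab hb') (Subtype.impEmbedding _ _ _).injective

/-- for an edge (a,b) of a stable matching M_s, at most |M_s| resources
are strictly preferred by a over its stable partner b (so b is among a's top
2|M_s|+1, indeed top |M_s|+1, choices). -/
theorem stable_partner_among_top {A B : Type*} [Fintype A] [Fintype B]
    (E : A → B → Prop) (prefA : A → B → B → Prop) (prefB : B → A → A → Prop)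
    (Ms : Matching A B) (hsp : StrictPrefs E prefA prefB)
    (hMs : Ms.RespectsE E) (hstable : Stable E prefA prefB Ms)
    (a : A) (b : B) (hab : Ms.mA a = some b) :
    Nat.card {b' : B // prefA a b' b} ≤ Ms.size :=
  stable_partner_among_top_general E prefA prefB Ms hsp hstable a b hab
end

section
/- In a one-one-LQ instance, let M' = M_e ∪ M_s where M_e saturates exactly the LQ resources and M_s is a stable matching of the subinstance H on vertices unmatched in M_e. Then any blocking pair (a,b) of M' with a unmatched in M_e must have b an LQ resource. -/
def Matching.IsSubmatching {A B : Type*} (M M' : Matching A B) : Prop :=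
  ∀ a b, M.mA a = some b → M'.mA a = some b

theorem Matching.IsSubmatching.mB_eq {A B : Type*} {M M' : Matching A B}
    (h : M.IsSubmatching M') {a : A} {b : B} (hb : M.mB b = some a) : M'.mB b = some a :=
  (M'.consistent a b).1 (h a b ((M.consistent a b).2 hb))

theorem BetterThan.of_some_imp {α : Type*} {p : α → Prop} {acc acc' : Prop}
    {o o' : Option α} (hsub : ∀ x, o = some x → o' = some x) (hacc : acc')
    (hb : BetterThan p acc o') : BetterThan p acc' o := by
  cases o with
  | none => exact hacc
  | some x => rwa [hsub x rfl] at hb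

theorem Blocking.of_isSubmatching {A B : Type*} {E E' : A → B → Prop}
    {prefA : A → B → B → Prop} {prefB : B → A → A → Prop} {M M' : Matching A B}
    (hsub : M.IsSubmatching M') {a : A} {b : B} (hbl : Blocking E prefA prefB M' a b)
    (hE' : E' a b) : Blocking E' prefA prefB M a b := by
  obtain ⟨-, hne, hA, hB⟩ := hbl
  exact ⟨hE', fun h => hne (hsub a b h), hA.of_some_imp (hsub a) hE',
    hB.of_some_imp (fun _ => hsub.mB_eq) hE'⟩

theorem union_blocking_pair_lq_general {A B : Type*} (E : A → B → Prop)
    (prefA : A → B → B → Prop) (prefB : B → A → A → Prop) (lq : B → Prop)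
    (Me Ms M' : Matching A B)
    (hsat : ∀ b, (Me.mB b).isSome ↔ lq b)
    (hMsStable :
      Stable (fun a b => E a b ∧ Me.mA a = none ∧ Me.mB b = none) prefA prefB Ms)
    (hM' : ∀ a b, M'.mA a = some b ↔ (Me.mA a = some b ∨ Ms.mA a = some b)) :
    ∀ a b, Blocking E prefA prefB M' a b → Me.mA a = none → lq b := by
  intro a b hbl haMe
  by_contra hlq
  have hbMe : Me.mB b = none := Option.not_isSome_iff_eq_none.1 (mt (hsat b).1 hlq)
  have hMsM' : Ms.IsSubmatching M' := fun a b h => (hM' a b).2 (Or.inr h)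
  exact hMsStable a b (hbl.of_isSubmatching hMsM' ⟨hbl.1, haMe, hbMe⟩)

/-- with M' = M_e ∪ M_s as in Statement 14, any blocking pair (a,b) of
M' in which a is unmatched in M_e must have b a lower-quota resource. -/
theorem union_blocking_pair_lq {A B : Type*} (E : A → B → Prop)
    (prefA : A → B → B → Prop) (prefB : B → A → A → Prop) (lq : B → Prop)
    (Me Ms M' : Matching A B) (hMe : Me.RespectsE E)
    (hsat : ∀ b, (Me.mB b).isSome ↔ lq b)
    (hMsH : Ms.RespectsE (fun a b => E a b ∧ Me.mA a = none ∧ Me.mB b = none))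
    (hMsStable :
      Stable (fun a b => E a b ∧ Me.mA a = none ∧ Me.mB b = none) prefA prefB Ms)
    (hM' : ∀ a b, M'.mA a = some b ↔ (Me.mA a = some b ∨ Ms.mA a = some b)) :
    ∀ a b, Blocking E prefA prefB M' a b → Me.mA a = none → lq b :=
  union_blocking_pair_lq_general E prefA prefB lq Me Ms M' hsat hMsStable hM'
end

section
/- For every w-regular graph G = (V,E) with w ≥ 1 and every k, the reduced one-one-LQ instance G' (with vertex-agents a_i, edge-agents a'_j, resource sets B_i of size deg(v_i)+1 with zero lower-quota, and k unit-lower-quota resources X, preferences as in the reduction) satisfies: G has an independent set of size k if and only if G' admits a feasible envy-free matching of size |V| + |E|. -/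
open scoped Classical

variable {V : Type*}

/-- Acceptability in the reduced instance: vertex-agent a_i accepts its resources B_i
and all of X; edge-agent a'_j accepts the resources of its two endpoints. -/
def redE (G : SimpleGraph V) (w k : ℕ) :
    (V ⊕ G.edgeSet) → ((V × Fin (w + 1)) ⊕ Fin k) → Prop
  | Sum.inl v, Sum.inl bv => bv.1 = v
  | Sum.inl _, Sum.inr _ => True
  | Sum.inr e, Sum.inl bv => bv.1 ∈ (e : Sym2 V)
  | Sum.inr _, Sum.inr _ => False

/-- Rank function encoding agents' preference lists: a_i lists B_i (in the fixed
order) then X; a'_j lists B_{j1} then B_{j2}, where the first endpoint is the one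
with smaller ordV-value. -/
noncomputable def redRankA (G : SimpleGraph V) (w k : ℕ) (ordV : V ↪ ℕ) :
    (V ⊕ G.edgeSet) → ((V × Fin (w + 1)) ⊕ Fin k) → ℕ
  | Sum.inl _, Sum.inl bv => bv.2.val
  | Sum.inl _, Sum.inr x => (w + 1) + x.val
  | Sum.inr e, Sum.inl bv =>
      if ∀ y ∈ (e : Sym2 V), ordV bv.1 ≤ ordV y then bv.2.val
      else (w + 1) + bv.2.val
  | Sum.inr _, Sum.inr _ => 0

/-- Rank function encoding resources' preference lists: b ∈ B_i lists a_i then the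
edge-agents of edges incident to v_i (in the fixed order ordE); x ∈ X lists all
vertex-agents (in the fixed order ordV). -/
noncomputable def redRankB (G : SimpleGraph V) (w k : ℕ) (ordV : V ↪ ℕ)
    (ordE : Sym2 V ↪ ℕ) : ((V × Fin (w + 1)) ⊕ Fin k) → (V ⊕ G.edgeSet) → ℕ
  | Sum.inl _, Sum.inl _ => 0
  | Sum.inl _, Sum.inr e => 1 + ordE (e : Sym2 V)
  | Sum.inr _, Sum.inl v => ordV v
  | Sum.inr _, Sum.inr _ => 0

/-- Agents' strict preferences in the reduced instance. -/
noncomputable def redPrefA (G : SimpleGraph V) (w k : ℕ) (ordV : V ↪ ℕ) :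
    (V ⊕ G.edgeSet) → ((V × Fin (w + 1)) ⊕ Fin k) →
      ((V × Fin (w + 1)) ⊕ Fin k) → Prop :=
  fun a b b' => redE G w k a b ∧ redE G w k a b' ∧
    redRankA G w k ordV a b < redRankA G w k ordV a b'

/-- Resources' strict preferences in the reduced instance. -/
noncomputable def redPrefB (G : SimpleGraph V) (w k : ℕ) (ordV : V ↪ ℕ)
    (ordE : Sym2 V ↪ ℕ) : ((V × Fin (w + 1)) ⊕ Fin k) → (V ⊕ G.edgeSet) →
      (V ⊕ G.edgeSet) → Prop :=
  fun b a a' => redE G w k a b ∧ redE G w k a' b ∧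
    redRankB G w k ordV ordE b a < redRankB G w k ordV ordE b a'

/-- Lower-quotas: exactly the X-resources have lower-quota 1. -/
def redLQ (w k : ℕ) : ((V × Fin (w + 1)) ⊕ Fin k) → Prop :=
  fun b => b.isRight

/-! Given an independent set `S` of size `k`, the vertices of `S` take the resources of `X` in
`ordV`-order (the order in which `X` ranks them), every other vertex `v` takes slot `0` of `B_v`,
and every edge takes a slot `≥ 1` of `B_t` for an endpoint `t ∉ S` (its first endpoint if
possible), the slots at `t` being ordered by `ordE`; since `deg t ≤ w`, the `w` slots suffice.
No agent has justified envy: a vertex-agent outside `S` holds its first choice, `X` ranks the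
vertices of `S` in the order in which they receive `X`, and an edge that `B_t` prefers to an edge
`e'` holds a resource it ranks at least as high as the slot of `e'` at `t`.

Conversely, a matching of size `|V| + |E|` matches every agent; feasibility puts exactly `k`
vertex-agents on `X`. If two of them were adjacent, the agent of their edge would sit in `B_z`
for one of them, `z`, and `a_z` envies it: `a_z` ranks `B_z` above `X`, and `B_z` ranks `a_z`
first. -/

open Finset Function

namespace Matching

variable {A B : Type*}

noncomputable def ofInjective (f : A → B) (hf : Injective f) : Matching A B where
  mA a := some (f a)
  mB := partialInv f
  consistent a b := by rw [hf.isPartialInv a b, Option.some_inj]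

variable {f : A → B} {hf : Injective f}

theorem isSome_ofInjective_mB (a : A) : ((ofInjective f hf).mB (f a)).isSome := by
  simp [ofInjective, partialInv_left hf]

theorem size_ofInjective : (ofInjective f hf).size = Nat.card A := by
  simp [size, ofInjective]

theorem isSome_mA_of_size_eq [Finite A] {M : Matching A B} (h : M.size = Nat.card A) (a : A) :
    (M.mA a).isSome := by
  by_contra ha
  exact (Finite.card_subtype_lt (p := fun a => (M.mA a).isSome) ha).ne h

end Matching

theorem envyFree_ofInjective {A B : Type*} {E : A → B → Prop} {prefA : A → B → B → Prop}
    {prefB : B → A → A → Prop} {f : A → B} (hf : Injective f)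
    (h : ∀ a a', prefB (f a') a a' → ¬ prefA a (f a') (f a)) :
    EnvyFree E prefA prefB (Matching.ofInjective f hf) := by
  rintro a a' ⟨b, hb, -, hab, hpref⟩
  obtain rfl := Option.some_inj.1 hb.symm
  exact h a a' hpref hab

section RankBy

variable {α : Type*} (key : α → ℕ) (s : Finset α)

def rankBy (a : α) : ℕ := #{b ∈ s | key b < key a}

variable {key s} {a b : α}

theorem rankBy_lt_rankBy (ha : a ∈ s) (h : key a < key b) : rankBy key s a < rankBy key s b := by
  refine card_lt_card ⟨fun c hc => ?_, fun hsub => ?_⟩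
  · rw [mem_filter] at hc ⊢
    exact ⟨hc.1, hc.2.trans h⟩
  · exact lt_irrefl _ (mem_filter.1 (hsub (mem_filter.2 ⟨ha, h⟩))).2

theorem rankBy_lt_card (ha : a ∈ s) : rankBy key s a < #s :=
  card_lt_card ⟨filter_subset _ s, fun hsub => lt_irrefl _ (mem_filter.1 (hsub ha)).2⟩

theorem rankBy_injOn (hkey : Injective key) : Set.InjOn (rankBy key s) s := by
  intro a ha b hb hab
  by_contra hne
  rcases (hkey.ne hne).lt_or_gt with h | h
  · exact (rankBy_lt_rankBy ha h).ne hab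
  · exact (rankBy_lt_rankBy hb h).ne' hab

theorem image_rankBy [DecidableEq α] (hkey : Injective key) : s.image (rankBy key s) = range #s :=
  eq_of_subset_of_card_le (fun _ hn => by
      obtain ⟨a, ha, rfl⟩ := mem_image.1 hn
      exact mem_range.2 (rankBy_lt_card ha))
    (by rw [card_range, card_image_of_injOn (rankBy_injOn hkey)])

end RankBy

section Endpoints

variable (ordV : V ↪ ℕ) {e : Sym2 V} {u v : V}

noncomputable def firstEnd : Sym2 V → V :=
  Sym2.lift ⟨fun a b => if ordV a ≤ ordV b then a else b, fun a b => by
    dsimp only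
    split_ifs with hab hba hba <;>
      first | rfl | exact ordV.injective (le_antisymm hab hba) | omega⟩

theorem firstEnd_mem (e : Sym2 V) : firstEnd ordV e ∈ e := by
  induction e using Sym2.ind with
  | _ a b =>
    simp only [firstEnd, Sym2.lift_mk]
    split_ifs <;> simp

theorem ordV_firstEnd_le (hv : v ∈ e) : ordV (firstEnd ordV e) ≤ ordV v := by
  induction e using Sym2.ind with
  | _ a b =>
    simp only [firstEnd, Sym2.lift_mk]
    rcases Sym2.mem_iff.1 hv with rfl | rfl <;> split_ifs <;> omega

theorem eq_firstEnd (hv : v ∈ e) (hmin : ∀ y ∈ e, ordV v ≤ ordV y) : v = firstEnd ordV e :=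
  ordV.injective (le_antisymm (hmin _ (firstEnd_mem ordV e)) (ordV_firstEnd_le ordV hv))

theorem eq_of_not_forall_le (hu : u ∈ e) (hv : v ∈ e) (hu' : ¬ ∀ y ∈ e, ordV u ≤ ordV y)
    (hv' : ¬ ∀ y ∈ e, ordV v ≤ ordV y) : u = v := by
  induction e using Sym2.ind with
  | _ a b =>
    simp only [Sym2.mem_iff, forall_eq_or_imp, forall_eq, not_and_or, not_le] at hu hv hu' hv'
    rcases hu with rfl | rfl <;> rcases hv with rfl | rfl <;> first | rfl | omega

variable (S : Finset V)

noncomputable def edgeTarget (e : Sym2 V) : V :=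
  if firstEnd ordV e ∈ S then Sym2.Mem.other (firstEnd_mem ordV e) else firstEnd ordV e

theorem edgeTarget_mem (e : Sym2 V) : edgeTarget ordV S e ∈ e := by
  unfold edgeTarget
  split_ifs
  · exact Sym2.other_mem _
  · exact firstEnd_mem ordV e

theorem edgeTarget_not_mem {G : SimpleGraph V} (hS : ∀ v ∈ S, ∀ u ∈ S, ¬ G.Adj v u)
    (he : e ∈ G.edgeSet) : edgeTarget ordV S e ∉ S := by
  unfold edgeTarget
  split_ifs with h
  · intro hother
    refine hS _ h _ hother ?_
    rwa [← SimpleGraph.mem_edgeSet, Sym2.other_spec]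
  · exact h

theorem edgeTarget_eq_of_forall_le (hv : v ∈ e) (hmin : ∀ y ∈ e, ordV v ≤ ordV y)
    (hvS : v ∉ S) :
    edgeTarget ordV S e = v := by
  obtain rfl := eq_firstEnd ordV hv hmin
  simp [edgeTarget, hvS]

end Endpoints

section Slots

variable [Fintype V] (ordV : V ↪ ℕ) (ordE : Sym2 V ↪ ℕ) (S : Finset V) (G : SimpleGraph V)
  [DecidableRel G.Adj] {e e' : Sym2 V}

/-- Slot `0` of every `B_v` is reserved for the vertex-agent of `v`. -/
noncomputable def edgeSlot (e : Sym2 V) : ℕ :=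
  1 + rankBy ordE (G.incidenceFinset (edgeTarget ordV S e)) e

variable {G}

theorem mem_incidenceFinset_edgeTarget (he : e ∈ G.edgeSet) :
    e ∈ G.incidenceFinset (edgeTarget ordV S e) :=
  (G.mem_incidenceFinset _ _).2 ⟨he, edgeTarget_mem ordV S e⟩

theorem edgeSlot_le {w : ℕ} (hdeg : ∀ v, G.degree v ≤ w) (he : e ∈ G.edgeSet) :
    edgeSlot ordV ordE S G e ≤ w := by
  have hlt := rankBy_lt_card (key := ordE) (mem_incidenceFinset_edgeTarget ordV S he)
  rw [G.card_incidenceFinset_eq_degree] at hlt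
  have := hdeg (edgeTarget ordV S e)
  unfold edgeSlot
  omega

theorem edgeSlot_lt_edgeSlot (he : e ∈ G.edgeSet)
    (htgt : edgeTarget ordV S e = edgeTarget ordV S e') (hlt : ordE e < ordE e') :
    edgeSlot ordV ordE S G e < edgeSlot ordV ordE S G e' := by
  have := rankBy_lt_rankBy (mem_incidenceFinset_edgeTarget ordV S he) hlt
  unfold edgeSlot
  rw [← htgt]
  omega

theorem eq_of_edgeSlot_eq (he : e ∈ G.edgeSet) (he' : e' ∈ G.edgeSet)
    (htgt : edgeTarget ordV S e = edgeTarget ordV S e')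
    (hslot : edgeSlot ordV ordE S G e = edgeSlot ordV ordE S G e') : e = e' := by
  refine rankBy_injOn ordE.injective (mem_incidenceFinset_edgeTarget ordV S he)
    (htgt ▸ mem_incidenceFinset_edgeTarget ordV S he') ?_
  unfold edgeSlot at hslot
  rw [htgt] at hslot ⊢
  omega

end Slots

section Forward

variable [Fintype V] {G : SimpleGraph V} [DecidableRel G.Adj] (ordV : V ↪ ℕ)
  (ordE : Sym2 V ↪ ℕ) {w k : ℕ}

noncomputable def vertexResource {S : Finset V} (hk : #S = k) (v : V) :
    (V × Fin (w + 1)) ⊕ Fin k :=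
  if hv : v ∈ S then .inr ⟨rankBy ordV S v, hk ▸ rankBy_lt_card hv⟩ else .inl (v, 0)

noncomputable def edgeResource (S : Finset V) (hdeg : ∀ v, G.degree v ≤ w) (e : G.edgeSet) :
    (V × Fin (w + 1)) ⊕ Fin k :=
  .inl (edgeTarget ordV S e,
    ⟨edgeSlot ordV ordE S G e, Nat.lt_succ_of_le (edgeSlot_le ordV ordE S hdeg e.2)⟩)

noncomputable def indepSetAssignment {S : Finset V} (hk : #S = k) (hdeg : ∀ v, G.degree v ≤ w) :
    V ⊕ G.edgeSet → (V × Fin (w + 1)) ⊕ Fin k :=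
  Sum.elim (vertexResource ordV hk) (edgeResource ordV ordE S hdeg)

theorem indepSetAssignment_injective {S : Finset V} (hk : #S = k) (hdeg : ∀ v, G.degree v ≤ w) :
    Injective (indepSetAssignment ordV ordE hk hdeg) := by
  refine Injective.sumElim (fun v v' h => ?_) (fun e e' h => ?_) (fun v e h => ?_)
  · unfold vertexResource at h
    split_ifs at h with hv hv'
    · exact rankBy_injOn ordV.injective hv hv' (by simpa using h)
    all_goals simp_all
  · simp only [edgeResource, Sum.inl.injEq, Prod.mk.injEq, Fin.mk.injEq] at h
    exact Subtype.ext (eq_of_edgeSlot_eq ordV ordE S e.2 e'.2 h.1 h.2)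
  · unfold vertexResource at h
    split_ifs at h
    · simp [edgeResource] at h
    · simp only [edgeResource, edgeSlot, Sum.inl.injEq, Prod.mk.injEq, Fin.ext_iff,
        Fin.val_zero] at h
      omega

variable {S : Finset V} (hk : #S = k) (hdeg : ∀ v, G.degree v ≤ w)

theorem respectsE_indepSetAssignment :
    (Matching.ofInjective _ (indepSetAssignment_injective ordV ordE hk hdeg)).RespectsE
      (redE G w k) := by
  rintro (v | e) b hb <;> obtain rfl := Option.some_inj.1 hb.symm
  · simp only [indepSetAssignment, Sum.elim_inl, vertexResource]
    split_ifs <;> trivial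
  · exact edgeTarget_mem ordV S e

theorem feasible_indepSetAssignment :
    Feasible (redLQ w k)
      (Matching.ofInjective _ (indepSetAssignment_injective ordV ordE hk hdeg)) := by
  rintro (b | x) hx
  · simp [redLQ] at hx
  obtain ⟨v, hv, hvx⟩ : ∃ v ∈ S, rankBy ordV S v = x := by
    rw [← mem_image, image_rankBy ordV.injective, hk]
    exact mem_range.2 x.2
  have hvS : indepSetAssignment ordV ordE hk hdeg (.inl v) = .inr x := by
    simp [indepSetAssignment, vertexResource, hv, hvx]
  rw [← hvS]
  exact Matching.isSome_ofInjective_mB _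

theorem redRankA_edgeResource_le (hS : ∀ v ∈ S, ∀ u ∈ S, ¬ G.Adj v u) {e e' : G.edgeSet}
    (hmem : edgeTarget ordV S e' ∈ (e : Sym2 V)) (hlt : ordE e < ordE e') :
    redRankA G w k ordV (.inr e) (edgeResource ordV ordE S hdeg e) ≤
      redRankA G w k ordV (.inr e) (edgeResource ordV ordE S hdeg e') := by
  have htS := edgeTarget_not_mem ordV S hS e'.2
  simp only [edgeResource, redRankA]
  by_cases hmin : ∀ y ∈ (e : Sym2 V), ordV (edgeTarget ordV S e') ≤ ordV y
  · have htgt := edgeTarget_eq_of_forall_le ordV S hmem hmin htS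
    have := edgeSlot_lt_edgeSlot ordV ordE S e.2 htgt hlt
    rw [htgt, if_pos hmin, if_pos hmin]
    omega
  · rw [if_neg hmin]
    by_cases htgt : edgeTarget ordV S e = edgeTarget ordV S e'
    · have := edgeSlot_lt_edgeSlot ordV ordE S e.2 htgt hlt
      rw [htgt, if_neg hmin]
      omega
    · -- at most one endpoint of `e` fails to be its first
      have hmin' : ∀ y ∈ (e : Sym2 V), ordV (edgeTarget ordV S e) ≤ ordV y := by
        by_contra h
        exact htgt (eq_of_not_forall_le ordV (edgeTarget_mem ordV S e) hmem h hmin)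
      have := edgeSlot_le ordV ordE S hdeg e.2
      rw [if_pos hmin']
      omega

theorem envyFree_indepSetAssignment (hS : ∀ v ∈ S, ∀ u ∈ S, ¬ G.Adj v u) :
    EnvyFree (redE G w k) (redPrefA G w k ordV) (redPrefB G w k ordV ordE)
      (Matching.ofInjective _ (indepSetAssignment_injective ordV ordE hk hdeg)) := by
  refine envyFree_ofInjective _ ?_
  rintro a (v' | e') ⟨hE, -, hrankB⟩ ⟨-, -, hrankA⟩
  · simp only [indepSetAssignment, Sum.elim_inl, vertexResource] at hE hrankB hrankA
    split_ifs at hE hrankB hrankA with hv'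
    · rcases a with v | e
      · simp only [redRankB] at hrankB
        simp only [Sum.elim_inl, vertexResource] at hrankA
        split_ifs at hrankA with hv
        · have := rankBy_lt_rankBy hv hrankB
          simp only [redRankA] at hrankA
          omega
        · simp [redRankA] at hrankA
      · exact hE
    · rcases a with v | e <;> simp [redRankB] at hrankB
  · rcases a with v | e
    · simp only [indepSetAssignment, Sum.elim_inl, Sum.elim_inr, vertexResource] at hE hrankA
      have hv : v ∉ S := hE ▸ edgeTarget_not_mem ordV S hS e'.2
      simp [hv, edgeResource, redRankA] at hrankA
    · have hlt : ordE e < ordE e' := by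
        simpa [redRankB, indepSetAssignment, edgeResource] using hrankB
      exact (redRankA_edgeResource_le ordV ordE hdeg hS hE hlt).not_gt hrankA

end Forward

theorem exists_matching_of_indepSet [Fintype V] {G : SimpleGraph V} [DecidableRel G.Adj]
    {w k : ℕ} (hdeg : ∀ v, G.degree v ≤ w) (ordV : V ↪ ℕ) (ordE : Sym2 V ↪ ℕ)
    {S : Finset V} (hk : #S = k) (hS : ∀ v ∈ S, ∀ u ∈ S, ¬ G.Adj v u) :
    ∃ M : Matching (V ⊕ G.edgeSet) ((V × Fin (w + 1)) ⊕ Fin k),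
      M.RespectsE (redE G w k) ∧ Feasible (redLQ w k) M ∧
      EnvyFree (redE G w k) (redPrefA G w k ordV) (redPrefB G w k ordV ordE) M ∧
      M.size = Fintype.card V + Nat.card G.edgeSet :=
  ⟨_, respectsE_indepSetAssignment ordV ordE hk hdeg,
    feasible_indepSetAssignment ordV ordE hk hdeg, envyFree_indepSetAssignment ordV ordE hk hdeg hS,
    by rw [Matching.size_ofInjective, Nat.card_sum, Nat.card_eq_fintype_card]⟩

section Backward

variable {G : SimpleGraph V} {w k : ℕ}
  {M : Matching (V ⊕ G.edgeSet) ((V × Fin (w + 1)) ⊕ Fin k)}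

theorem exists_vertex_mA_eq_inr (hE : M.RespectsE (redE G w k))
    (hfeas : Feasible (redLQ w k) M) (x : Fin k) : ∃ v, M.mA (.inl v) = some (.inr x) := by
  obtain ⟨a, ha⟩ := Option.isSome_iff_exists.1 (hfeas (.inr x) rfl)
  have hax := (M.consistent a _).2 ha
  rcases a with v | e
  · exact ⟨v, hax⟩
  · exact (hE _ _ hax).elim

theorem envies_of_mA_eq_inr (ordV : V ↪ ℕ) (ordE : Sym2 V ↪ ℕ)
    (hE : M.RespectsE (redE G w k))
    {z : V} {x : Fin k} {e : G.edgeSet} {i : Fin (w + 1)} (hz : M.mA (.inl z) = some (.inr x))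
    (he : M.mA (.inr e) = some (.inl (z, i))) :
    Envies (redE G w k) (redPrefA G w k ordV) (redPrefB G w k ordV ordE) M (.inl z) (.inr e) := by
  refine ⟨_, he, rfl, ?_, rfl, hE _ _ he, ?_⟩
  · rw [hz]
    refine ⟨rfl, trivial, ?_⟩
    simp only [redRankA]
    omega
  · simp only [redRankB]
    omega

theorem not_adj_of_mA_eq_inr (ordV : V ↪ ℕ) (ordE : Sym2 V ↪ ℕ)
    (hE : M.RespectsE (redE G w k))
    (hEF : EnvyFree (redE G w k) (redPrefA G w k ordV) (redPrefB G w k ordV ordE) M)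
    (hall : ∀ a, (M.mA a).isSome) {u v : V} {x y : Fin k}
    (hu : M.mA (.inl u) = some (.inr x)) (hv : M.mA (.inl v) = some (.inr y)) : ¬ G.Adj u v := by
  intro huv
  obtain ⟨b, hb⟩ := Option.isSome_iff_exists.1 (hall (.inr ⟨s(u, v), huv⟩))
  rcases b with ⟨z, i⟩ | x'
  · rcases Sym2.mem_iff.1 (hE _ _ hb) with rfl | rfl
    · exact hEF _ _ (envies_of_mA_eq_inr ordV ordE hE hu hb)
    · exact hEF _ _ (envies_of_mA_eq_inr ordV ordE hE hv hb)
  · exact hE _ _ hb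

theorem exists_indepSet_of_matching [Fintype V] (ordV : V ↪ ℕ) (ordE : Sym2 V ↪ ℕ)
    (hE : M.RespectsE (redE G w k)) (hfeas : Feasible (redLQ w k) M)
    (hEF : EnvyFree (redE G w k) (redPrefA G w k ordV) (redPrefB G w k ordV ordE) M)
    (hsize : M.size = Fintype.card V + Nat.card G.edgeSet) :
    ∃ S : Finset V, #S = k ∧ ∀ v ∈ S, ∀ u ∈ S, ¬ G.Adj v u := by
  have hall := M.isSome_mA_of_size_eq
    (by rw [hsize, Nat.card_sum, Nat.card_eq_fintype_card (α := V)])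
  choose g hg using exists_vertex_mA_eq_inr hE hfeas
  have hg_inj : Injective g := fun x y hxy => by
    have hx := hg x
    rw [hxy, hg y] at hx
    simpa using hx.symm
  refine ⟨univ.image g, by rw [card_image_of_injective _ hg_inj, card_fin], ?_⟩
  simp only [mem_image, mem_univ, true_and, forall_exists_index, forall_apply_eq_imp_iff]
  exact fun x y => not_adj_of_mA_eq_inr ordV ordE hE hEF hall (hg x) (hg y)

end Backward

theorem indepSet_iff_feasible_envyFree_general {V : Type*} [Fintype V]
    (G : SimpleGraph V) [DecidableRel G.Adj] (w k : ℕ)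
    (hreg : ∀ v : V, G.degree v = w) (ordV : V ↪ ℕ) (ordE : Sym2 V ↪ ℕ) :
    (∃ S : Finset V, S.card = k ∧ ∀ v ∈ S, ∀ u ∈ S, ¬ G.Adj v u) ↔
    (∃ M : Matching (V ⊕ G.edgeSet) ((V × Fin (w + 1)) ⊕ Fin k),
      M.RespectsE (redE G w k) ∧ Feasible (redLQ w k) M ∧
      EnvyFree (redE G w k) (redPrefA G w k ordV) (redPrefB G w k ordV ordE) M ∧
      M.size = Fintype.card V + Nat.card G.edgeSet) := by
  constructor
  · rintro ⟨S, hk, hS⟩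
    exact exists_matching_of_indepSet (fun v => (hreg v).le) ordV ordE hk hS
  · rintro ⟨M, hE, hfeas, hEF, hsize⟩
    exact exists_indepSet_of_matching ordV ordE hE hfeas hEF hsize

/-- for every w-regular graph G (w ≥ 1) and every k, G has an
independent set of size k iff the reduced one-one-LQ instance admits a feasible
envy-free matching of size |V| + |E|. -/
theorem indepSet_iff_feasible_envyFree {V : Type*} [Fintype V] [DecidableEq V]
    (G : SimpleGraph V) [DecidableRel G.Adj] (w k : ℕ) (hw : 1 ≤ w)
    (hreg : ∀ v : V, G.degree v = w) (ordV : V ↪ ℕ) (ordE : Sym2 V ↪ ℕ) :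
    (∃ S : Finset V, S.card = k ∧ ∀ v ∈ S, ∀ u ∈ S, ¬ G.Adj v u) ↔
    (∃ M : Matching (V ⊕ G.edgeSet) ((V × Fin (w + 1)) ⊕ Fin k),
      M.RespectsE (redE G w k) ∧ Feasible (redLQ w k) M ∧
      EnvyFree (redE G w k) (redPrefA G w k ordV) (redPrefB G w k ordV ordE) M ∧
      M.size = Fintype.card V + Nat.card G.edgeSet) :=
  indepSet_iff_feasible_envyFree_general G w k hreg ordV ordE
end

section
/- In a one-to-one instance, let M be a matching and b an unmatched resource with threshold agent t(b) defined as the most-preferred agent a in b's list such that a is matched in M and b ≻_a M(a) (if existing). Then for any envy-free matching M₁ ⊇ M and any edge (a', b) ∈ M₁ \ M, agent a' satisfies a' ≻_b t(b) or t(b) does not exist. -/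
theorem EnvyFree.not_prefB_of_prefA {A B : Type*} {E : A → B → Prop}
    {prefA : A → B → B → Prop} {prefB : B → A → A → Prop} {M : Matching A B}
    (hef : EnvyFree E prefA prefB M) {a a' : A} {b b₀ : B} (ha' : M.mA a' = some b)
    (hab : E a b) (ha : M.mA a = some b₀) (hpref : prefA a b b₀) : ¬ prefB b a a' :=
  fun h => hef a a' ⟨b, ha', hab, by rw [ha]; exact hpref, h⟩

/- `t` keeps its `M`-partner in `M₁`, which it likes less than `b`; so `t ≻_b a'` would be
justified envy of `t` towards `a'`. -/
theorem threshold_agent_bound_general {A B : Type*} (E : A → B → Prop)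
    (prefA : A → B → B → Prop) (prefB : B → A → A → Prop) (M M₁ : Matching A B)
    (hsp : StrictPrefs E prefA prefB) (hM₁ : M₁.RespectsE E)
    (hsub : ∀ a b, M.mA a = some b → M₁.mA a = some b)
    (hef : EnvyFree E prefA prefB M₁)
    (b : B)
    (t : A) (htE : E t b)
    (htm : ∃ bt, M.mA t = some bt ∧ prefA t b bt)
    (a' : A) (ha' : M₁.mA a' = some b) :
    prefB b a' t := by
  obtain ⟨bt, hbt, hpref⟩ := htm
  have hbt₁ : M₁.mA t = some bt := hsub t bt hbt
  have hne : a' ≠ t := by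
    rintro rfl
    obtain rfl : b = bt := Option.some.inj (ha'.symm.trans hbt₁)
    exact hsp.irreflA a' b hpref
  exact (hsp.totalB b a' t (hM₁ a' b ha') htE hne).resolve_right
    (hef.not_prefB_of_prefA ha' htE hbt₁ hpref)

/-- let t be the threshold agent of a resource b unmatched in M (the
b-most-preferred agent matched in M that prefers b over its partner). Then in any
envy-free matching M₁ extending M, any agent a' newly matched to b satisfies
a' ≻_b t. -/
theorem threshold_agent_bound {A B : Type*} (E : A → B → Prop)
    (prefA : A → B → B → Prop) (prefB : B → A → A → Prop) (M M₁ : Matching A B)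
    (hsp : StrictPrefs E prefA prefB) (hM : M.RespectsE E) (hM₁ : M₁.RespectsE E)
    (hsub : ∀ a b, M.mA a = some b → M₁.mA a = some b)
    (hef : EnvyFree E prefA prefB M₁)
    (b : B) (hb : M.mB b = none)
    (t : A) (htE : E t b)
    (htm : ∃ bt, M.mA t = some bt ∧ prefA t b bt)
    (htmax : ∀ a'', E a'' b → (∃ b'', M.mA a'' = some b'' ∧ prefA a'' b b'') →
      a'' = t ∨ prefB b t a'')
    (a' : A) (ha' : M₁.mA a' = some b) (hnew : M.mA a' ≠ some b) :
    prefB b a' t :=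
  threshold_agent_bound_general E prefA prefB M M₁ hsp hM₁ hsub hef b t htE htm a' ha'
end
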